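/- Let G ∈ ℝ^{N×N} be a symmetric positive semidefinite matrix with eigenvalues λ_1 ≥ λ_2 ≥ … ≥ λ_N ≥ 0 (listed with multiplicity), and let 1 ≤ p ≤ N. Then for every matrix Y ∈ ℝ^{p×N} one has ‖YᵀY − G‖_F² ≥ Σ_{i=p+1}^N λ_i², and there exists Y ∈ ℝ^{p×N} attaining equality; hence the classical MDS problem min_Y ‖YᵀY − G‖_F² has optimal value Σ_{i=p+1}^N λ_i². -/

import Mathlib

/-!
Write `G = Uᵀ Λ U` with `U` orthogonal. Conjugating by `U` preserves the Frobenius norm, so with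
`Z = Y Uᵀ` the problem becomes minimising `‖ZᵀZ - Λ‖_F²` over `Z ∈ ℝ^{p×N}`.

For the lower bound, `ker Z` has dimension at least `N - p`; pick an orthonormal family
`v₁, …, v_{N-p}` in it. Then `(ZᵀZ - Λ) vₖ = -Λ vₖ`, and Bessel's inequality applied to the rows
of `ZᵀZ - Λ` gives `‖ZᵀZ - Λ‖_F² ≥ ∑ₖ ‖Λ vₖ‖² = ∑ᵢ λᵢ² wᵢ` with weights `wᵢ = ∑ₖ vₖ(i)²`.
These satisfy `0 ≤ wᵢ ≤ 1` and `∑ wᵢ = N - p`, and for such weights and decreasing `λᵢ²` the sum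
`∑ᵢ λᵢ² wᵢ` is smallest when the weight sits on the last `N - p` indices.

Equality is attained by `Z` with entries `√λᵢ` on the diagonal, for which
`ZᵀZ - Λ = -diag(0, …, 0, λ_{p+1}, …, λ_N)`.
-/

open Matrix Finset

section

variable {ι m n : Type*} [Fintype ι] [Fintype m] [Fintype n]

lemma sum_sq_entries_eq_trace (M : Matrix m n ℝ) : ∑ i, ∑ j, M i j ^ 2 = (Mᵀ * M).trace := by
  simp only [trace, Matrix.diag, mul_apply, transpose_apply, sq]
  exact sum_comm

theorem Orthonormal.sum_sq_dotProduct_le {v : ι → EuclideanSpace ℝ n} (hv : Orthonormal ℝ v)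
    (x : n → ℝ) : ∑ k, (v k ⬝ᵥ x) ^ 2 ≤ ∑ j, x j ^ 2 := by
  simpa [EuclideanSpace.real_norm_sq_eq, EuclideanSpace.inner_eq_star_dotProduct,
    dotProduct_comm] using hv.sum_inner_products_le (s := univ) (WithLp.toLp 2 x)

theorem Orthonormal.sum_sq_mulVec_le {v : ι → EuclideanSpace ℝ n} (hv : Orthonormal ℝ v)
    (M : Matrix m n ℝ) : ∑ k, ∑ i, (M *ᵥ v k) i ^ 2 ≤ ∑ i, ∑ j, M i j ^ 2 := by
  rw [sum_comm]
  refine sum_le_sum fun i _ => ?_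
  simpa only [mulVec, dotProduct_comm] using hv.sum_sq_dotProduct_le (M i)

theorem Orthonormal.sum_sq_apply_le_one {v : ι → EuclideanSpace ℝ n} (hv : Orthonormal ℝ v)
    (i : n) : ∑ k, v k i ^ 2 ≤ 1 := by
  classical
  simpa [dotProduct_single, Pi.single_apply, apply_ite (· ^ 2)] using
    hv.sum_sq_dotProduct_le (Pi.single i 1)

theorem Orthonormal.sum_sum_sq_apply {v : ι → EuclideanSpace ℝ n} (hv : Orthonormal ℝ v) :
    ∑ i, ∑ k, v k i ^ 2 = Fintype.card ι := by
  rw [sum_comm]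
  simp [← EuclideanSpace.real_norm_sq_eq, hv.1]

lemma exists_orthonormal_mulVec_eq_zero (Z : Matrix m n ℝ) :
    ∃ v : Fin (Fintype.card n - Fintype.card m) → EuclideanSpace ℝ n,
      Orthonormal ℝ v ∧ ∀ k, Z *ᵥ v k = 0 := by
  let f := Z.mulVecLin ∘ₗ (WithLp.linearEquiv 2 ℝ (n → ℝ)).toLinearMap
  have hdim : Fintype.card n - Fintype.card m ≤ Module.finrank ℝ (LinearMap.ker f) := by
    have hrange : Module.finrank ℝ (LinearMap.range f) ≤ Fintype.card m :=
      (Submodule.finrank_le _).trans (by simp)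
    have := LinearMap.finrank_range_add_finrank_ker f
    simp only [finrank_euclideanSpace] at this
    omega
  let b := stdOrthonormalBasis ℝ (LinearMap.ker f)
  refine ⟨fun k => b (Fin.castLE hdim k), ?_, fun k => (b (Fin.castLE hdim k)).2⟩
  exact (b.orthonormal.comp _ (Fin.castLE_injective hdim)).comp_linearIsometry
    (LinearMap.ker f).subtypeₗᵢ

variable [DecidableEq n]

lemma sum_sq_entries_conj_of_orthogonal {U : Matrix n n ℝ} (hU : Uᵀ * U = 1)
    (M : Matrix n n ℝ) : ∑ i, ∑ j, (Uᵀ * M * U) i j ^ 2 = ∑ i, ∑ j, M i j ^ 2 := by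
  have hU' : U * Uᵀ = 1 := mul_eq_one_comm.mp hU
  rw [sum_sq_entries_eq_trace, sum_sq_entries_eq_trace, transpose_mul, transpose_mul,
    transpose_transpose]
  calc (Uᵀ * (Mᵀ * U) * (Uᵀ * M * U)).trace = (Uᵀ * (Mᵀ * M) * U).trace := by
        simp only [Matrix.mul_assoc, ← Matrix.mul_assoc U Uᵀ, hU', Matrix.one_mul]
    _ = (Mᵀ * M).trace := by
        rw [trace_mul_cycle, ← Matrix.mul_assoc, hU', Matrix.one_mul]

lemma sum_sq_gram_sub_conj_of_orthogonal {U : Matrix n n ℝ} (hU : Uᵀ * U = 1)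
    (Y : Matrix m n ℝ) (D : Matrix n n ℝ) :
    ∑ i, ∑ j, (Yᵀ * Y - Uᵀ * D * U) i j ^ 2
      = ∑ i, ∑ j, ((Y * Uᵀ)ᵀ * (Y * Uᵀ) - D) i j ^ 2 := by
  have hconj : Yᵀ * Y - Uᵀ * D * U = Uᵀ * ((Y * Uᵀ)ᵀ * (Y * Uᵀ) - D) * U := by
    simp only [Matrix.mul_sub, Matrix.sub_mul, transpose_mul, transpose_transpose,
      Matrix.mul_assoc, hU, Matrix.mul_one]
    rw [← Matrix.mul_assoc Uᵀ U, hU, Matrix.one_mul]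
  rw [hconj, sum_sq_entries_conj_of_orthogonal hU]

lemma sum_sq_entries_diagonal (d : n → ℝ) : ∑ i, ∑ j, diagonal d i j ^ 2 = ∑ i, d i ^ 2 := by
  refine sum_congr rfl fun i _ => ?_
  rw [sum_eq_single i (fun j _ hj => by simp [diagonal_apply_ne _ hj.symm]) (by simp),
    diagonal_apply_eq]

end

lemma sum_le_sum_mul_of_threshold {ι : Type*} [Fintype ι] [DecidableEq ι] (s : Finset ι)
    {a w : ι → ℝ} (c : ℝ) (hs : ∀ i ∈ s, a i ≤ c) (hsc : ∀ i ∉ s, c ≤ a i)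
    (hw0 : ∀ i, 0 ≤ w i) (hw1 : ∀ i, w i ≤ 1) (hw : ∑ i, w i = #s) :
    ∑ i ∈ s, a i ≤ ∑ i, a i * w i := by
  -- each term `(a i - c) * (𝟙ₛ i - w i)` is `≤ 0`, and the terms with `c` sum to zero
  have hterm : ∀ i, (a i - c) * ((if i ∈ s then 1 else 0) - w i) ≤ 0 := by
    intro i
    by_cases hi : i ∈ s
    · simp only [hi, if_true]
      exact mul_nonpos_of_nonpos_of_nonneg (by linarith [hs i hi]) (by linarith [hw1 i])
    · simp only [hi, if_false]
      exact mul_nonpos_of_nonneg_of_nonpos (by linarith [hsc i hi]) (by linarith [hw0 i])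
  have hsum := sum_nonpos fun i (_ : i ∈ univ) => hterm i
  simp only [mul_sub, sub_mul, mul_ite, mul_one, mul_zero, sum_sub_distrib, ← sum_filter,
    filter_mem_eq_inter, univ_inter, ← mul_sum, hw, sum_const, nsmul_eq_mul] at hsum
  linarith

lemma Fin.card_filter_le_val (N p : ℕ) :
    #({i : Fin N | p ≤ (i : ℕ)} : Finset (Fin N)) = N - p := by
  rw [← card_map Fin.valEmbedding, ← Nat.card_Ico]
  congr 1
  ext x
  simp only [mem_map, mem_filter, mem_univ, true_and, Fin.valEmbedding_apply, mem_Ico]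
  exact ⟨fun ⟨i, hi, hix⟩ => hix ▸ ⟨hi, i.2⟩, fun ⟨hx, hxN⟩ => ⟨⟨x, hxN⟩, hx, rfl⟩⟩

lemma Fin.sum_ite_val_eq {M : Type*} [AddCommMonoid M] {p : ℕ} (j : ℕ) (f : Fin p → M) :
    ∑ i : Fin p, (if (i : ℕ) = j then f i else 0) = if h : j < p then f ⟨j, h⟩ else 0 := by
  split_ifs with h
  · rw [sum_eq_single_of_mem ⟨j, h⟩ (mem_univ _) fun i _ hi => if_neg fun hij => hi (Fin.ext hij)]
    simp
  · exact sum_eq_zero fun i _ => if_neg fun (hij : (i : ℕ) = j) => h (hij ▸ i.2)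

lemma sum_sq_tail_le_sum_sq_gram_sub_diagonal {N p : ℕ} {lam : Fin N → ℝ} (hanti : Antitone lam)
    (hnonneg : ∀ i, 0 ≤ lam i) (Z : Matrix (Fin p) (Fin N) ℝ) :
    ∑ i ∈ univ.filter (fun i : Fin N => p ≤ (i : ℕ)), lam i ^ 2
      ≤ ∑ i, ∑ j, (Zᵀ * Z - diagonal lam) i j ^ 2 := by
  rcases le_or_gt N p with hNp | hpN
  · rw [filter_false_of_mem fun i _ => by omega, sum_empty]
    positivity
  obtain ⟨v, hv, hker⟩ := exists_orthonormal_mulVec_eq_zero Z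
  have hresidual : ∀ k i, ((Zᵀ * Z - diagonal lam) *ᵥ v k) i = -(lam i * v k i) := by
    simp [sub_mulVec, ← mulVec_mulVec, hker, mulVec_diagonal]
  let q : Fin N := ⟨p, hpN⟩
  calc ∑ i ∈ univ.filter (fun i : Fin N => p ≤ (i : ℕ)), lam i ^ 2
      ≤ ∑ i, lam i ^ 2 * ∑ k, v k i ^ 2 := by
        refine sum_le_sum_mul_of_threshold _ (lam q ^ 2) (fun i hi => ?_) (fun i hi => ?_)
          (fun i => sum_nonneg fun k _ => sq_nonneg _) hv.sum_sq_apply_le_one ?_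
        · exact pow_le_pow_left₀ (hnonneg i) (hanti (mem_filter.mp hi).2) 2
        · exact pow_le_pow_left₀ (hnonneg q) (hanti (by simpa using hi : (i : ℕ) < p).le) 2
        · simp [hv.sum_sum_sq_apply, Fin.card_filter_le_val]
    _ = ∑ k, ∑ i, ((Zᵀ * Z - diagonal lam) *ᵥ v k) i ^ 2 := by
        simp only [hresidual, mul_sum, neg_sq, mul_pow]
        exact sum_comm
    _ ≤ ∑ i, ∑ j, (Zᵀ * Z - diagonal lam) i j ^ 2 := hv.sum_sq_mulVec_le _

noncomputable def mdsEmbedding {N : ℕ} (p : ℕ) (lam : Fin N → ℝ) : Matrix (Fin p) (Fin N) ℝ :=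
  of fun i j => if (i : ℕ) = j then √(lam j) else 0

lemma mdsEmbedding_gram {N p : ℕ} {lam : Fin N → ℝ} (hnonneg : ∀ i, 0 ≤ lam i) :
    (mdsEmbedding p lam)ᵀ * mdsEmbedding p lam
      = diagonal fun j : Fin N => if (j : ℕ) < p then lam j else 0 := by
  ext j j'
  simp only [mdsEmbedding, mul_apply, transpose_apply, of_apply, ite_mul, zero_mul,
    Fin.sum_ite_val_eq, diagonal_apply, Fin.val_inj]
  split_ifs <;> simp_all [Real.mul_self_sqrt]

lemma sum_sq_mdsEmbedding_gram_sub_diagonal {N p : ℕ} {lam : Fin N → ℝ}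
    (hnonneg : ∀ i, 0 ≤ lam i) :
    ∑ i, ∑ j, ((mdsEmbedding p lam)ᵀ * mdsEmbedding p lam - diagonal lam) i j ^ 2
      = ∑ i ∈ univ.filter (fun i : Fin N => p ≤ (i : ℕ)), lam i ^ 2 := by
  rw [mdsEmbedding_gram hnonneg, diagonal_sub, sum_sq_entries_diagonal, sum_filter]
  refine sum_congr rfl fun i _ => ?_
  split_ifs <;> first | omega | ring

theorem stmt_10_general (N p : ℕ)
    (G : Matrix (Fin N) (Fin N) ℝ)
    (lam : Fin N → ℝ)
    (hsorted : ∀ i j : Fin N, i ≤ j → lam j ≤ lam i)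
    (hnonneg : ∀ i, 0 ≤ lam i)
    (hdiag : ∃ U : Matrix (Fin N) (Fin N) ℝ,
      Uᵀ * U = 1 ∧ G = Uᵀ * Matrix.diagonal lam * U) :
    (∀ Y : Matrix (Fin p) (Fin N) ℝ,
        ∑ i ∈ Finset.univ.filter (fun i : Fin N => p ≤ (i : ℕ)), lam i ^ 2
          ≤ ∑ i, ∑ j, (Yᵀ * Y - G) i j ^ 2) ∧
    ∃ Y : Matrix (Fin p) (Fin N) ℝ,
        ∑ i, ∑ j, (Yᵀ * Y - G) i j ^ 2
          = ∑ i ∈ Finset.univ.filter (fun i : Fin N => p ≤ (i : ℕ)), lam i ^ 2 := by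
  obtain ⟨U, hU, rfl⟩ := hdiag
  refine ⟨fun Y => ?_, mdsEmbedding p lam * U, ?_⟩
  · rw [sum_sq_gram_sub_conj_of_orthogonal hU]
    exact sum_sq_tail_le_sum_sq_gram_sub_diagonal hsorted hnonneg _
  · rw [sum_sq_gram_sub_conj_of_orthogonal hU, Matrix.mul_assoc, mul_eq_one_comm.mp hU,
      Matrix.mul_one]
    exact sum_sq_mdsEmbedding_gram_sub_diagonal hnonneg

/-- For a symmetric PSD matrix `G` with eigenvalues `λ₁ ≥ … ≥ λ_N ≥ 0` (listed with
multiplicity, realized by an orthogonal diagonalization) and `1 ≤ p ≤ N`, every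
`Y ∈ ℝ^{p×N}` satisfies `‖YᵀY - G‖_F² ≥ ∑_{i>p} λᵢ²`, and some `Y` attains equality;
hence the classical MDS problem has optimal value `∑_{i>p} λᵢ²`. -/
theorem stmt_10 (N p : ℕ) (hp1 : 1 ≤ p) (hpN : p ≤ N)
    (G : Matrix (Fin N) (Fin N) ℝ) (hGsymm : G.IsSymm)
    (lam : Fin N → ℝ)
    (hsorted : ∀ i j : Fin N, i ≤ j → lam j ≤ lam i)
    (hnonneg : ∀ i, 0 ≤ lam i)
    (hdiag : ∃ U : Matrix (Fin N) (Fin N) ℝ,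
      Uᵀ * U = 1 ∧ G = Uᵀ * Matrix.diagonal lam * U) :
    (∀ Y : Matrix (Fin p) (Fin N) ℝ,
        ∑ i ∈ Finset.univ.filter (fun i : Fin N => p ≤ (i : ℕ)), lam i ^ 2
          ≤ ∑ i, ∑ j, (Yᵀ * Y - G) i j ^ 2) ∧
    ∃ Y : Matrix (Fin p) (Fin N) ℝ,
        ∑ i, ∑ j, (Yᵀ * Y - G) i j ^ 2
          = ∑ i ∈ Finset.univ.filter (fun i : Fin N => p ≤ (i : ℕ)), lam i ^ 2 :=
  stmt_10_general N p G lam hsorted hnonneg hdiag
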